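/- arXiv:hep-th/9706118 — 4 statements merged into one kernel-verified Lean document; each statement's English description precedes it below -/
import Mathlib

section
/- Let V be a vector space over a field of characteristic zero and let a(y,z) = ∑_{k,ℓ∈ℤ} a_{k,ℓ} y^{-k-1} z^{-ℓ-1} be a formal series in two variables with coefficients in V having only finitely many nonzero terms of negative degree in z (i.e., a_{k,ℓ} = 0 for ℓ sufficiently negative, uniformly in k). If (y−z)^m · a(y,z) = 0 for some nonnegative integer m, then a(y,z) = 0. -/
/-- Multiplication of a two-variable formal series by `(y - z)`, coefficientwise:
the coefficient of `y^{-k-1} z^{-l-1}` in `(y-z)·a` is `a_{k+1,l} - a_{k,l+1}`. -/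
def mulYZ {V : Type*} [AddCommGroup V] (a : ℤ → ℤ → V) : ℤ → ℤ → V :=
  fun p q => a (p + 1) q - a p (q + 1)

lemma stmt0_aux {V : Type*} [AddCommGroup V] (m : ℕ) :
    ∀ (a : ℤ → ℤ → V), (∃ l₀ : ℤ, ∀ p l : ℤ, l₀ ≤ l → a p l = 0) →
      mulYZ^[m] a = (fun _ _ => (0 : V)) → a = fun _ _ => (0 : V) := by
  induction m with
  | zero => intro a _ hm; simpa using hm
  | succ m ih =>
    intro a ⟨l₀, hfin⟩ hm
    have hb : mulYZ a = fun _ _ => (0 : V) := by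
      apply ih
      · exact ⟨l₀, fun p l hl => by
          simp [mulYZ, hfin (p+1) l hl, hfin p (l+1) (by omega)]⟩
      · rw [← Function.iterate_succ_apply]; exact hm
    have key : ∀ p q : ℤ, a (p + 1) q = a p (q + 1) := fun p q =>
      sub_eq_zero.mp (congrFun (congrFun hb p) q)
    have shift : ∀ (n : ℕ) (p l : ℤ), a p l = a (p - n) (l + n) := by
      intro n
      induction n with
      | zero => simp
      | succ n ihn =>
        intro p l
        rw [ihn p l]
        have := key (p - n - 1) (l + n)
        push_cast
        rw [show p - (n + 1 : ℤ) = p - n - 1 by ring,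
          show l + ((n : ℤ) + 1) = l + n + 1 by ring, ← this]
        ring_nf
    funext p l
    obtain ⟨n, hn⟩ : ∃ n : ℕ, l₀ ≤ l + n := ⟨(l₀ - l).toNat, by omega⟩
    rw [shift n p l, hfin _ _ hn]

/-- If a two-variable formal series with coefficients in a vector space over a field of
characteristic zero has only finitely many terms of negative degree in `z`
(i.e. `a k l = 0` for all `l ≥ l₀`) and is killed by `(y - z)^m`, then it is zero. -/
theorem stmt0 {k V : Type*} [Field k] [CharZero k] [AddCommGroup V] [Module k V]
    (a : ℤ → ℤ → V) (m : ℕ)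
    (hfin : ∃ l₀ : ℤ, ∀ p l : ℤ, l₀ ≤ l → a p l = 0)
    (hm : mulYZ^[m] a = fun _ _ => (0 : V)) :
    a = fun _ _ => (0 : V) :=
  stmt0_aux m a hfin hm
end

section
/- For all integers p, q, r, expanding (x−y)^r (y−z)^q (x−z)^p in the region |x|>|y|>|z| directly and via the intermediate expansion in |x−z|>|y−z| gives equal coefficients: for all a, b, c with a+b+c = p+q+r, ∑_{i,j,k≥0} (−1)^{i+j+k} C(r,i) C(q,j) C(p,k) [p+r−i−k = a][q+i−j = b][j+k = c] = ∑_{i,j,k≥0} (−1)^{i+j+k} C(r,i) C(p+r−i,j) C(q+i,k) [p+r−i−j = a][q+i−k = b][j+k = c], where C(n,m) = n(n−1)⋯(n−m+1)/m! is the generalized binomial coefficient and [·] is the Iverson bracket. -/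
/-- Generalized binomial coefficient `C(n,i)` for `n : ℤ`, `i : ℕ`. -/
def ichoose (n : ℤ) (i : ℕ) : ℤ :=
  if 0 ≤ n then (n.toNat.choose i : ℤ)
  else (-1) ^ i * ((((i : ℤ) - 1 - n).toNat.choose i : ℤ))

lemma ichoose_eq_choose (n : ℤ) (i : ℕ) : ichoose n i = Ring.choose n i := by
  unfold ichoose
  split_ifs with h
  · have hn : ((n.toNat : ℕ) : ℤ) = n := by omega
    conv_rhs => rw [← hn]
    rw [Ring.choose_natCast]
  · push_neg at h
    have hfac : (i.factorial : ℤ) ≠ 0 := by exact_mod_cast i.factorial_ne_zero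
    refine mul_left_cancel₀ hfac ?_
    have h1 : (i.factorial : ℤ) * Ring.choose n i = (descPochhammer ℤ i).smeval n := by
      rw [Ring.descPochhammer_eq_factorial_smul_choose, nsmul_eq_mul]
    rw [h1]
    have h2 : (descPochhammer ℤ i).smeval n
        = (ascPochhammer ℕ i).smeval (n - i + 1) := by
      rw [Polynomial.descPochhammer_smeval_eq_ascPochhammer]
    have h3 : (n - (i:ℤ) + 1) = -(((i:ℤ) - 1 - n)) := by ring
    have h4 : ((i:ℤ) - 1 - n) = (((((i:ℤ)) - 1 - n).toNat : ℕ) : ℤ) := by omega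
    rw [h2, h3, h4, Polynomial.ascPochhammer_smeval_neg_eq_descPochhammer,
      Polynomial.descPochhammer_smeval_eq_descFactorial]
    rw [Nat.descFactorial_eq_factorial_mul_choose]
    push_cast
    simp only [Int.toNat_natCast]
    rw [Units.smul_def, Int.coe_negOnePow_natCast]
    ring

open Finset in
lemma orth_core (A K : ℕ) :
    ∑ i ∈ range (A+1), (-1:ℤ)^i * (A.choose i) * (i.choose K)
      = if K = A then (-1:ℤ)^A else 0 := by
  by_cases hK : A < K
  · rw [if_neg (by omega)]
    apply Finset.sum_eq_zero
    intro i hi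
    simp only [mem_range] at hi
    rw [Nat.choose_eq_zero_of_lt (show i < K by omega)]
    norm_num
  · push_neg at hK
    have hsplit : range (A+1) = Finset.Ico 0 K ∪ Finset.Ico K (A+1) := by
      rw [Finset.Ico_union_Ico_eq_Ico (by omega) (by omega)]
      rw [Finset.range_eq_Ico]
    rw [hsplit, Finset.sum_union (by
      apply Finset.Ico_disjoint_Ico_consecutive)]
    have h1 : ∑ i ∈ Finset.Ico 0 K, (-1:ℤ)^i * (A.choose i) * (i.choose K) = 0 := by
      apply Finset.sum_eq_zero
      intro i hi
      simp only [mem_Ico] at hi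
      rw [Nat.choose_eq_zero_of_lt (show i < K by omega)]
      norm_num
    rw [h1, zero_add, Finset.sum_Ico_eq_sum_range]
    have h2 : ∀ j ∈ range (A + 1 - K), (-1:ℤ)^(K+j) * (A.choose (K+j)) * ((K+j).choose K)
        = ((-1:ℤ)^K * (A.choose K)) * ((-1:ℤ)^j * ((A-K).choose j)) := by
      intro j hj
      simp only [mem_range] at hj
      have hc : A.choose (K+j) * (K+j).choose K = A.choose K * (A-K).choose j := by
        have := Nat.choose_mul (n := A) (k := K + j) (s := K) (by omega)
        simpa using this
      have h5 := congrArg (Nat.cast (R := ℤ)) hc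
      push_cast at h5
      rw [pow_add]
      linear_combination ((-1:ℤ)^K * (-1:ℤ)^j) * h5
    rw [Finset.sum_congr rfl h2, ← Finset.mul_sum]
    have h3 : A + 1 - K = (A - K) + 1 := by omega
    rw [h3, Int.alternating_sum_range_choose]
    by_cases hKA : K = A
    · subst hKA; simp
    · rw [if_neg (by omega), if_neg hKA, mul_zero]

open Finset in
lemma orth' (n c s t : ℕ) (hs : s ≤ n) (ht : t ≤ c) :
    ∑ k ∈ range (n+1), (if s ≤ k ∧ k + t ≤ c then
        (-1:ℤ)^k * ((n-s).choose (n-k)) * ((n-k).choose (c-k-t)) else 0)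
      = if s + t = c then (-1:ℤ)^s else 0 := by
  rw [← Finset.sum_range_reflect]
  simp only [show n + 1 - 1 = n from rfl]
  by_cases hcn : n + t < c
  · rw [if_neg (by omega)]
    apply Finset.sum_eq_zero
    intro i hi
    simp only [mem_range] at hi
    split_ifs with hg
    · rw [Nat.choose_eq_zero_of_lt (show n - (n - i) < c - (n - i) - t by omega)]
      ring
    · rfl
  · push_neg at hcn
    have key2 : ∀ i ∈ range (n+1),
        (if s ≤ n - i ∧ (n - i) + t ≤ c then
          (-1:ℤ)^(n-i) * ((n-s).choose (n-(n-i))) * ((n-(n-i)).choose (c-(n-i)-t)) else 0)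
        = (-1:ℤ)^n * ((-1:ℤ)^i * ((n-s).choose i) * (i.choose (n+t-c))) := by
      intro i hi
      simp only [mem_range] at hi
      have hii : n - (n - i) = i := by omega
      have hsgn : (-1:ℤ)^(n-i) = (-1:ℤ)^n * (-1:ℤ)^i := by
        rw [← pow_add, show n + i = (n - i) + 2 * i by omega, pow_add, pow_mul]
        norm_num
      split_ifs with hg
      · rw [hii, show c - (n - i) - t = i - (n+t-c) by omega,
          Nat.choose_symm (show n + t - c ≤ i by omega), hsgn]
        ring
      · push_neg at hg
        by_cases h1 : s ≤ n - i
        · have h2 := hg h1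
          rw [Nat.choose_eq_zero_of_lt (show i < n + t - c by omega)]
          ring
        · rw [Nat.choose_eq_zero_of_lt (show n - s < i by omega)]
          ring
    rw [Finset.sum_congr rfl key2, ← Finset.mul_sum]
    have hshrink : ∑ i ∈ range (n+1), ((-1:ℤ)^i * ((n-s).choose i) * (i.choose (n+t-c)))
        = ∑ i ∈ range (n-s+1), ((-1:ℤ)^i * ((n-s).choose i) * (i.choose (n+t-c))) := by
      refine (Finset.sum_subset (by apply Finset.range_subset_range.mpr; omega) ?_).symm
      intro x hx hnx
      simp only [mem_range] at hx hnx
      rw [Nat.choose_eq_zero_of_lt (show n - s < x by omega)]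
      ring
    rw [hshrink, orth_core (n-s) (n+t-c)]
    by_cases hstc : s + t = c
    · rw [if_pos (by omega), if_pos hstc, ← pow_add,
        show n + (n - s) = s + 2 * (n - s) by omega, pow_add, pow_mul]
      norm_num
    · rw [if_neg (by omega), if_neg hstc, mul_zero]

lemma tri (r : ℤ) (N K : ℕ) (h : K ≤ N) :
    Ring.choose r K * Ring.choose (r - (K:ℤ)) (N - K) = ((N.choose K : ℕ) : ℤ) * Ring.choose r N := by
  rw [← Ring.choose_smul_choose r h, nsmul_eq_mul]

open Finset in
lemma vand (x y : ℤ) (k : ℕ) :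
    Ring.choose (x + y) k = ∑ s ∈ range (k+1), Ring.choose x s * Ring.choose y (k - s) := by
  rw [Ring.add_choose_eq k (Commute.all x y),
    ← Finset.Nat.sum_antidiagonal_eq_sum_range_succ (fun s u => Ring.choose x s * Ring.choose y u)]

open Finset in
lemma key (p q r : ℤ) (n c : ℕ) :
    ∑ k ∈ range (n+1), (if k ≤ c then
        (-1:ℤ)^k * Ring.choose r (n-k) * Ring.choose q (c-k) * Ring.choose p k else 0)
  = ∑ k ∈ range (n+1), (if k ≤ c then
        (-1:ℤ)^k * Ring.choose r (n-k) * Ring.choose (p + r - (n:ℤ) + (k:ℤ)) k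
          * Ring.choose (q + (n:ℤ) - (k:ℤ)) (c-k) else 0) := by
  symm
  set G : ℕ → ℕ → ℕ → ℤ := fun k s t =>
    (if s ≤ k ∧ k + t ≤ c then
        (-1:ℤ)^k * (((n-s).choose (n-k) : ℕ) : ℤ) * (((n-k).choose (c-k-t) : ℕ) : ℤ) else 0)
      * (Ring.choose r (n-s) * Ring.choose p s * Ring.choose q t) with hG
  have step1 : ∀ k ∈ range (n+1), (if k ≤ c then
        (-1:ℤ)^k * Ring.choose r (n-k) * Ring.choose (p + r - (n:ℤ) + (k:ℤ)) k
          * Ring.choose (q + (n:ℤ) - (k:ℤ)) (c-k) else 0)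
      = ∑ s ∈ range (n+1), ∑ t ∈ range (c+1), G k s t := by
    intro k hk
    simp only [mem_range] at hk
    have hkn : k ≤ n := by omega
    by_cases hkc : k ≤ c
    · rw [if_pos hkc]
      have e1 : p + r - (n:ℤ) + (k:ℤ) = p + (r - (((n-k : ℕ) : ℕ) : ℤ)) := by
        rw [Nat.cast_sub hkn]; ring
      have e2 : q + (n:ℤ) - (k:ℤ) = q + (((n-k : ℕ) : ℕ) : ℤ) := by
        rw [Nat.cast_sub hkn]; ring
      have expand : (-1:ℤ)^k * Ring.choose r (n-k) * Ring.choose (p + r - (n:ℤ) + (k:ℤ)) k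
            * Ring.choose (q + (n:ℤ) - (k:ℤ)) (c-k)
          = ∑ s ∈ range (k+1), ∑ t ∈ range (c-k+1),
              ((-1:ℤ)^k * (((n-s).choose (n-k) : ℕ) : ℤ) * (((n-k).choose (c-k-t) : ℕ) : ℤ))
                * (Ring.choose r (n-s) * Ring.choose p s * Ring.choose q t) := by
        rw [e1, e2, vand p _ k, vand q _ (c-k)]
        simp only [Ring.choose_natCast]
        simp only [Finset.mul_sum, Finset.sum_mul]
        rw [Finset.sum_comm]
        refine sum_congr rfl fun s hs => sum_congr rfl fun t ht => ?_
        simp only [mem_range] at hs ht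
        have h0 : (n-s) - (n-k) = k - s := by omega
        have htri := tri r (n-s) (n-k) (by omega)
        rw [h0] at htri
        linear_combination ((-1:ℤ)^k * Ring.choose p s * Ring.choose q t
          * (((n-k).choose (c-k-t) : ℕ) : ℤ)) * htri
      rw [expand]
      symm
      rw [← Finset.sum_subset (Finset.range_subset_range.mpr (show k+1 ≤ n+1 by omega))
        (fun s _ hs => ?_)]
      swap
      · apply Finset.sum_eq_zero
        intro t _
        simp only [mem_range] at hs
        rw [hG]
        simp only
        rw [if_neg (by omega), zero_mul]
      refine sum_congr rfl fun s hs => ?_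
      simp only [mem_range] at hs
      rw [← Finset.sum_subset (Finset.range_subset_range.mpr (show c-k+1 ≤ c+1 by omega))
        (fun t _ ht => ?_)]
      swap
      · simp only [mem_range] at ht
        rw [hG]
        simp only
        rw [if_neg (by omega), zero_mul]
      refine sum_congr rfl fun t ht => ?_
      simp only [mem_range] at ht
      rw [hG]
      simp only
      rw [if_pos (by omega)]
    · rw [if_neg hkc]
      symm
      apply Finset.sum_eq_zero
      intro s _
      apply Finset.sum_eq_zero
      intro t _
      rw [hG]
      simp only
      rw [if_neg (by omega), zero_mul]
  rw [Finset.sum_congr rfl step1, Finset.sum_comm]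
  rw [Finset.sum_congr rfl (fun s _ => Finset.sum_comm (γ := ℕ))]
  refine sum_congr rfl fun s hs => ?_
  simp only [mem_range] at hs
  have inner : ∀ t ∈ range (c+1), (∑ k ∈ range (n+1), G k s t)
      = (if s + t = c then (-1:ℤ)^s else 0)
        * (Ring.choose r (n-s) * Ring.choose p s * Ring.choose q t) := by
    intro t ht
    simp only [mem_range] at ht
    rw [hG]
    simp only
    rw [← Finset.sum_mul]
    rw [orth' n c s t (by omega) (by omega)]
  rw [Finset.sum_congr rfl inner]
  rw [Finset.sum_eq_single (c - s) (fun t ht htne => ?_) (fun h => absurd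
    (Finset.mem_range.mpr (by omega)) h)]
  · by_cases hsc : s ≤ c
    · rw [if_pos (by omega), if_pos hsc]
      ring
    · rw [if_neg (by omega), if_neg hsc, zero_mul]
  · simp only [mem_range] at ht
    rw [if_neg (by omega), zero_mul]

lemma finsum_pin (d : ℤ) (P : ℕ → Prop) [DecidablePred P] (G : ℕ → ℤ)
    (hP : ∀ l, P l → (l : ℤ) = d) :
    (∑ᶠ l : ℕ, (if P l then G l else 0))
      = if 0 ≤ d ∧ P d.toNat then G d.toNat else 0 := by
  by_cases hd : 0 ≤ d ∧ P d.toNat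
  · rw [if_pos hd, finsum_eq_single _ d.toNat (fun x hx => ?_), if_pos hd.2]
    rw [if_neg]
    intro hPx
    exact hx (by have := hP x hPx; omega)
  · rw [if_neg hd]
    apply finsum_eq_zero_of_forall_eq_zero
    intro x
    rw [if_neg]
    intro hPx
    have := hP x hPx
    exact hd ⟨by omega, by rwa [show d.toNat = x by omega]⟩

lemma finsum_pin2 (d e : ℤ) (P : ℕ → ℕ → Prop) [∀ j l, Decidable (P j l)] (G : ℕ → ℕ → ℤ)
    (hPl : ∀ j l, P j l → (l : ℤ) = d) (hPj : ∀ j l, P j l → (j : ℤ) = e) :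
    (∑ᶠ (j : ℕ) (l : ℕ), if P j l then G j l else 0)
      = if 0 ≤ d ∧ 0 ≤ e ∧ P e.toNat d.toNat then G e.toNat d.toNat else 0 := by
  have h1 : ∀ j : ℕ, (∑ᶠ l : ℕ, if P j l then G j l else 0)
      = if 0 ≤ d ∧ P j d.toNat then G j d.toNat else 0 :=
    fun j => finsum_pin d (P j) (G j) (fun l hl => hPl j l hl)
  rw [finsum_congr h1, finsum_pin e (fun j => 0 ≤ d ∧ P j d.toNat) (fun j => G j d.toNat)
    (fun j hj => hPj j d.toNat hj.2)]
  by_cases h : 0 ≤ d ∧ 0 ≤ e ∧ P e.toNat d.toNat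
  · rw [if_pos ⟨h.2.1, h.1, h.2.2⟩, if_pos h]
  · rw [if_neg (by tauto), if_neg h]

lemma neg_one_pow_eq (u v : ℕ) (h : u % 2 = v % 2) : (-1:ℤ)^u = (-1:ℤ)^v := by
  conv_lhs => rw [← Nat.div_add_mod u 2]
  conv_rhs => rw [← Nat.div_add_mod v 2]
  rw [pow_add, pow_add, pow_mul, pow_mul]
  norm_num [h]

open Finset

/-- Equality of the coefficients of `x^a y^b z^c` in the two iterated expansions of
`(x-y)^r (y-z)^q (x-z)^p` in the region `|x|>|y|>|z|`: directly, and via the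
intermediate expansion in `|x-z|>|y-z|`. -/
theorem stmt1 (p q r a b c : ℤ) (habc : a + b + c = p + q + r) :
    (∑ᶠ (i : ℕ) (j : ℕ) (l : ℕ),
      (if p + r - (i : ℤ) - (l : ℤ) = a ∧ q + (i : ℤ) - (j : ℤ) = b ∧ (j : ℤ) + (l : ℤ) = c then
        (-1 : ℤ) ^ (i + j + l) * ichoose r i * ichoose q j * ichoose p l else 0))
    = ∑ᶠ (i : ℕ) (j : ℕ) (l : ℕ),
      (if p + r - (i : ℤ) - (j : ℤ) = a ∧ q + (i : ℤ) - (l : ℤ) = b ∧ (j : ℤ) + (l : ℤ) = c then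
        (-1 : ℤ) ^ (i + j + l) * ichoose r i * ichoose (p + r - i) j * ichoose (q + i) l
      else 0) := by
  simp only [ichoose_eq_choose]
  by_cases hNc : 0 ≤ p + r - a ∧ 0 ≤ c
  · obtain ⟨hN, hc⟩ := hNc
    set n := (p + r - a).toNat with hn
    set cc := c.toNat with hcc
    have L1 : (∑ᶠ (i : ℕ) (j : ℕ) (l : ℕ),
        (if p + r - (i : ℤ) - (l : ℤ) = a ∧ q + (i : ℤ) - (j : ℤ) = b ∧ (j : ℤ) + (l : ℤ) = c then
          (-1 : ℤ) ^ (i + j + l) * Ring.choose r i * Ring.choose q j * Ring.choose p l else 0))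
        = ∑ᶠ (i : ℕ),
          (if 0 ≤ p + r - a - (i:ℤ) ∧ 0 ≤ q + (i:ℤ) - b ∧
              (p + r - (i:ℤ) - ((p + r - a - (i:ℤ)).toNat : ℤ) = a ∧
               q + (i:ℤ) - ((q + (i:ℤ) - b).toNat : ℤ) = b ∧
               (((q + (i:ℤ) - b).toNat : ℕ) : ℤ) + (((p + r - a - (i:ℤ)).toNat : ℕ) : ℤ) = c) then
            (-1 : ℤ) ^ (i + (q + (i:ℤ) - b).toNat + (p + r - a - (i:ℤ)).toNat)
              * Ring.choose r i * Ring.choose q ((q + (i:ℤ) - b).toNat)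
              * Ring.choose p ((p + r - a - (i:ℤ)).toNat) else 0) :=
      finsum_congr (fun i => finsum_pin2 (p + r - a - (i:ℤ)) (q + (i:ℤ) - b)
        (fun j l => p + r - (i : ℤ) - (l : ℤ) = a ∧ q + (i : ℤ) - (j : ℤ) = b ∧ (j : ℤ) + (l : ℤ) = c)
        (fun j l => (-1 : ℤ) ^ (i + j + l) * Ring.choose r i * Ring.choose q j * Ring.choose p l)
        (fun j l h => by omega) (fun j l h => by omega))
    have R1 : (∑ᶠ (i : ℕ) (j : ℕ) (l : ℕ),
        (if p + r - (i : ℤ) - (j : ℤ) = a ∧ q + (i : ℤ) - (l : ℤ) = b ∧ (j : ℤ) + (l : ℤ) = c then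
          (-1 : ℤ) ^ (i + j + l) * Ring.choose r i * Ring.choose (p + r - i) j
            * Ring.choose (q + i) l else 0))
        = ∑ᶠ (i : ℕ),
          (if 0 ≤ q + (i:ℤ) - b ∧ 0 ≤ p + r - a - (i:ℤ) ∧
              (p + r - (i:ℤ) - ((p + r - a - (i:ℤ)).toNat : ℤ) = a ∧
               q + (i:ℤ) - ((q + (i:ℤ) - b).toNat : ℤ) = b ∧
               (((p + r - a - (i:ℤ)).toNat : ℕ) : ℤ) + (((q + (i:ℤ) - b).toNat : ℕ) : ℤ) = c) then
            (-1 : ℤ) ^ (i + (p + r - a - (i:ℤ)).toNat + (q + (i:ℤ) - b).toNat)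
              * Ring.choose r i * Ring.choose (p + r - i) ((p + r - a - (i:ℤ)).toNat)
              * Ring.choose (q + i) ((q + (i:ℤ) - b).toNat) else 0) :=
      finsum_congr (fun i => finsum_pin2 (q + (i:ℤ) - b) (p + r - a - (i:ℤ))
        (fun j l => p + r - (i : ℤ) - (j : ℤ) = a ∧ q + (i : ℤ) - (l : ℤ) = b ∧ (j : ℤ) + (l : ℤ) = c)
        (fun j l => (-1 : ℤ) ^ (i + j + l) * Ring.choose r i * Ring.choose (p + r - i) j
          * Ring.choose (q + i) l)
        (fun j l h => by omega) (fun j l h => by omega))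
    rw [L1, R1]
    rw [finsum_eq_sum_of_support_subset _ (s := range (n+1)) ?hs1,
        finsum_eq_sum_of_support_subset _ (s := range (n+1)) ?hs2]
    case hs1 =>
      intro i hi
      simp only [Function.mem_support] at hi
      simp only [Finset.coe_range, Set.mem_Iio]
      by_contra hin
      apply hi
      rw [if_neg]
      intro hcond
      omega
    case hs2 =>
      intro i hi
      simp only [Function.mem_support] at hi
      simp only [Finset.coe_range, Set.mem_Iio]
      by_contra hin
      apply hi
      rw [if_neg]
      intro hcond
      omega
    conv_lhs => rw [← Finset.sum_range_reflect]
    conv_rhs => rw [← Finset.sum_range_reflect]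
    simp only [Nat.add_sub_cancel]
    have L2 : ∀ k ∈ range (n+1),
        (if 0 ≤ p + r - a - ((n-k : ℕ):ℤ) ∧ 0 ≤ q + ((n-k : ℕ):ℤ) - b ∧
            (p + r - ((n-k : ℕ):ℤ) - ((p + r - a - ((n-k : ℕ):ℤ)).toNat : ℤ) = a ∧
             q + ((n-k : ℕ):ℤ) - ((q + ((n-k : ℕ):ℤ) - b).toNat : ℤ) = b ∧
             (((q + ((n-k : ℕ):ℤ) - b).toNat : ℕ) : ℤ) + (((p + r - a - ((n-k : ℕ):ℤ)).toNat : ℕ) : ℤ) = c) then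
          (-1 : ℤ) ^ ((n-k) + (q + ((n-k : ℕ):ℤ) - b).toNat + (p + r - a - ((n-k : ℕ):ℤ)).toNat)
            * Ring.choose r (n-k) * Ring.choose q ((q + ((n-k : ℕ):ℤ) - b).toNat)
            * Ring.choose p ((p + r - a - ((n-k : ℕ):ℤ)).toNat) else 0)
        = (if k ≤ cc then (-1:ℤ)^(n+cc) *
            ((-1:ℤ)^k * Ring.choose r (n-k) * Ring.choose q (cc-k) * Ring.choose p k) else 0) := by
      intro k hk
      simp only [mem_range] at hk
      split_ifs with h1 h2
      · have e1 : (p + r - a - ((n-k : ℕ):ℤ)).toNat = k := by omega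
        have e2 : (q + ((n-k : ℕ):ℤ) - b).toNat = cc - k := by omega
        rw [e1, e2]
        have hsgn : (-1:ℤ)^((n-k) + (cc-k) + k) = (-1:ℤ)^(n+cc) * (-1:ℤ)^k := by
          conv_rhs => rw [← pow_add]
          exact neg_one_pow_eq _ _ (by omega)
        rw [hsgn]
        ring
      · exfalso; omega
      · exfalso; omega
      · rfl
    have R2 : ∀ k ∈ range (n+1),
        (if 0 ≤ q + ((n-k : ℕ):ℤ) - b ∧ 0 ≤ p + r - a - ((n-k : ℕ):ℤ) ∧
            (p + r - ((n-k : ℕ):ℤ) - ((p + r - a - ((n-k : ℕ):ℤ)).toNat : ℤ) = a ∧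
             q + ((n-k : ℕ):ℤ) - ((q + ((n-k : ℕ):ℤ) - b).toNat : ℤ) = b ∧
             (((p + r - a - ((n-k : ℕ):ℤ)).toNat : ℕ) : ℤ) + (((q + ((n-k : ℕ):ℤ) - b).toNat : ℕ) : ℤ) = c) then
          (-1 : ℤ) ^ ((n-k) + (p + r - a - ((n-k : ℕ):ℤ)).toNat + (q + ((n-k : ℕ):ℤ) - b).toNat)
            * Ring.choose r (n-k) * Ring.choose (p + r - ((n-k : ℕ):ℤ)) ((p + r - a - ((n-k : ℕ):ℤ)).toNat)
            * Ring.choose (q + ((n-k : ℕ):ℤ)) ((q + ((n-k : ℕ):ℤ) - b).toNat) else 0)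
        = (if k ≤ cc then (-1:ℤ)^(n+cc) *
            ((-1:ℤ)^k * Ring.choose r (n-k) * Ring.choose (p + r - (n:ℤ) + (k:ℤ)) k
              * Ring.choose (q + (n:ℤ) - (k:ℤ)) (cc-k)) else 0) := by
      intro k hk
      simp only [mem_range] at hk
      split_ifs with h1 h2
      · have e1 : (p + r - a - ((n-k : ℕ):ℤ)).toNat = k := by omega
        have e2 : (q + ((n-k : ℕ):ℤ) - b).toNat = cc - k := by omega
        have e3 : p + r - ((n-k : ℕ):ℤ) = p + r - (n:ℤ) + (k:ℤ) := by
          rw [Nat.cast_sub (by omega)]; ring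
        have e4 : q + ((n-k : ℕ):ℤ) = q + (n:ℤ) - (k:ℤ) := by
          rw [Nat.cast_sub (by omega)]; ring
        rw [e1, e2, e3, e4]
        have hsgn : (-1:ℤ)^((n-k) + k + (cc-k)) = (-1:ℤ)^(n+cc) * (-1:ℤ)^k := by
          conv_rhs => rw [← pow_add]
          exact neg_one_pow_eq _ _ (by omega)
        rw [hsgn]
        ring
      · exfalso; omega
      · exfalso; omega
      · rfl
    rw [Finset.sum_congr rfl L2, Finset.sum_congr rfl R2]
    have pull : ∀ (F : ℕ → ℤ), (∑ k ∈ range (n+1), if k ≤ cc then (-1:ℤ)^(n+cc) * F k else 0)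
        = (-1:ℤ)^(n+cc) * ∑ k ∈ range (n+1), (if k ≤ cc then F k else 0) := by
      intro F
      rw [Finset.mul_sum]
      exact Finset.sum_congr rfl fun k _ => by rw [mul_ite, mul_zero]
    rw [pull, pull]
    congr 1
    exact key p q r n cc
  · push_neg at hNc
    have hL : (∑ᶠ (i : ℕ) (j : ℕ) (l : ℕ),
        (if p + r - (i : ℤ) - (l : ℤ) = a ∧ q + (i : ℤ) - (j : ℤ) = b ∧ (j : ℤ) + (l : ℤ) = c then
          (-1 : ℤ) ^ (i + j + l) * Ring.choose r i * Ring.choose q j * Ring.choose p l else 0))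
        = 0 := by
      apply finsum_eq_zero_of_forall_eq_zero; intro i
      apply finsum_eq_zero_of_forall_eq_zero; intro j
      apply finsum_eq_zero_of_forall_eq_zero; intro l
      rw [if_neg]
      rintro ⟨h1, h2, h3⟩
      have hx : 0 ≤ p + r - a := by omega
      have := hNc hx
      omega
    have hR : (∑ᶠ (i : ℕ) (j : ℕ) (l : ℕ),
        (if p + r - (i : ℤ) - (j : ℤ) = a ∧ q + (i : ℤ) - (l : ℤ) = b ∧ (j : ℤ) + (l : ℤ) = c then
          (-1 : ℤ) ^ (i + j + l) * Ring.choose r i * Ring.choose (p + r - i) j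
            * Ring.choose (q + i) l else 0)) = 0 := by
      apply finsum_eq_zero_of_forall_eq_zero; intro i
      apply finsum_eq_zero_of_forall_eq_zero; intro j
      apply finsum_eq_zero_of_forall_eq_zero; intro l
      rw [if_neg]
      rintro ⟨h1, h2, h3⟩
      have hx : 0 ≤ p + r - a := by omega
      have := hNc hx
      omega
    rw [hL, hR]
end

section
/- If fields A(z) and B(z) on M are mutually local of order n₀ ≥ 1 (i.e., [A(y),B(z)](y−z)^n = 0 exactly for n ≥ n₀), then ∂A(z) and B(z) are mutually local of order exactly n₀ + 1. -/
open Finset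

section VA

variable {k M : Type*} [Field k] [CharZero k] [AddCommGroup M] [Module k M]

/-- `(-1)^m` for an integer `m`. -/
def msign (m : ℤ) : ℤ := if Even m then 1 else -1

/-- A series on `M`, given by its Fourier modes `A_n`. -/
abbrev Ser (M : Type*) : Type _ := ℤ → M → M

/-- `A(z)` is a field: modes applied to any vector vanish for large index. -/
def IsFieldSer (A : Ser M) : Prop := ∀ v : M, ∃ n₀ : ℤ, ∀ n ≥ n₀, A n v = 0

/-- All modes are `k`-linear, i.e. the coefficients are endomorphisms of the
vector space `M`. -/
def IsLinSer (A : Ser M) : Prop := ∀ n : ℤ, IsLinearMap k (A n)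

/-- Residual `m`-th product, in Fourier modes:
`(A_(m)B)_n = ∑_{i≥0} (-1)^i C(m,i) (A_{m-i} B_{n+i} - (-1)^m B_{m+n-i} A_i)`. -/
noncomputable def resProd (A B : Ser M) (m : ℤ) : Ser M := fun n v =>
  ∑ᶠ i : ℕ, ((-1 : ℤ) ^ i * ichoose m i) •
    (A (m - (i : ℤ)) (B (n + (i : ℤ)) v) - msign m • B (m + n - (i : ℤ)) (A (i : ℤ) v))

/-- Mutual locality at order `n`, in Fourier modes:
`∑_{i=0}^n (-1)^i C(n,i) (A_{p+n-i} B_{q+i} - (-1)^n B_{q+n-i} A_{p+i}) = 0`. -/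
def IsLocalAt (A B : Ser M) (n : ℕ) : Prop :=
  ∀ (p q : ℤ) (v : M),
    ∑ i ∈ Finset.range (n + 1), ((-1 : ℤ) ^ i * (n.choose i : ℤ)) •
      (A (p + (n : ℤ) - (i : ℤ)) (B (q + (i : ℤ)) v)
        - (-1 : ℤ) ^ n • B (q + (n : ℤ) - (i : ℤ)) (A (p + (i : ℤ)) v)) = 0

/-- `A` and `B` are mutually local of order exactly `n₀`. -/
def HasOrder (A B : Ser M) (n₀ : ℕ) : Prop :=
  IsLocalAt A B n₀ ∧ ∀ n : ℕ, IsLocalAt A B n → n₀ ≤ n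

/-- The identity field `I(z) = id`. -/
def idSer : Ser M := fun n v => if n = -1 then v else 0

/-- Derivative of a series: `(∂A)_n = -n A_{n-1}`. -/
def dSer (A : Ser M) : Ser M := fun n v => (-n) • A (n - 1) v

/-- Divided-power derivative: `(∂^{(i)}A)_n = (-1)^i C(n,i) A_{n-i}`. -/
def dpowSer (i : ℕ) (A : Ser M) : Ser M := fun n v =>
  ((-1 : ℤ) ^ i * ichoose n i) • A (n - (i : ℤ)) v

/-- Normally ordered product `:A(z)B(z): = A(z)₋B(z) + B(z)A(z)₊`, in modes. -/
noncomputable def noProd (A B : Ser M) : Ser M := fun n v =>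
  (∑ᶠ i : ℕ, A (-(i : ℤ) - 1) (B (n + (i : ℤ)) v)) + ∑ᶠ i : ℕ, B (n - 1 - (i : ℤ)) (A (i : ℤ) v)


/-! ### Auxiliary lemmas for `stmt6` -/

section Stmt6Aux

lemma VA.sum_pascal {M : Type*} [AddCommGroup M] (n : ℕ) (F : ℕ → M) :
    ∑ i ∈ range (n+2), ((-1:ℤ)^i * ((n+1).choose i : ℤ)) • F i
      = ∑ i ∈ range (n+1), ((-1:ℤ)^i * (n.choose i : ℤ)) • F i
        - ∑ i ∈ range (n+1), ((-1:ℤ)^i * (n.choose i : ℤ)) • F (i+1) := by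
  have h0 : ∀ i ∈ range (n+1), ((-1:ℤ)^(i+1) * ((n+1).choose (i+1) : ℤ)) • F (i+1)
      = ((-1:ℤ)^(i+1) * (n.choose (i+1) : ℤ)) • F (i+1)
        - ((-1:ℤ)^i * (n.choose i : ℤ)) • F (i+1) := by
    intro i _
    rw [← sub_smul]; congr 1
    rw [Nat.choose_succ_succ]; push_cast; ring
  rw [Finset.sum_range_succ' _ (n+1), Finset.sum_congr rfl h0, Finset.sum_sub_distrib]
  rw [Finset.sum_range_succ' (fun i => ((-1:ℤ)^i * (n.choose i : ℤ)) • F i) n]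
  rw [Finset.sum_range_succ (fun i => ((-1:ℤ)^(i+1) * (n.choose (i+1) : ℤ)) • F (i+1)) n]
  simp [Nat.choose_succ_self]
  abel

lemma VA.choose_cast_key (n i : ℕ) (hle : i ≤ n + 1) :
    (((n+1).choose i : ℤ)) * ((n:ℤ)+1-(i:ℤ)) = ((n:ℤ)+1) * (n.choose i : ℤ) := by
  have h := Nat.choose_mul_succ_eq n i
  have h2 : ((n.choose i * (n+1) : ℕ) : ℤ) = (((n+1).choose i * (n+1-i) : ℕ) : ℤ) := by
    exact_mod_cast congrArg (Nat.cast : ℕ → ℤ) h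
  push_cast [Nat.cast_sub hle] at h2
  linarith

lemma VA.sum_key2 {M : Type*} [AddCommGroup M] (n : ℕ) (F : ℕ → M) :
    ∑ i ∈ range (n+2), ((-1:ℤ)^i * ((n+1).choose i : ℤ) * ((n:ℤ)+1-(i:ℤ))) • F i
      = ∑ i ∈ range (n+1), (((n:ℤ)+1) * ((-1:ℤ)^i * (n.choose i : ℤ))) • F i := by
  rw [Finset.sum_range_succ _ (n+1)]
  have h1 : ((-1:ℤ)^(n+1) * (((n+1).choose (n+1)) : ℤ) * ((n:ℤ)+1-((n+1:ℕ):ℤ))) • F (n+1) = 0 := by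
    push_cast; simp
  rw [h1, add_zero]
  refine Finset.sum_congr rfl fun i hi => ?_
  congr 1
  have hle : i ≤ n + 1 := by simp at hi; omega
  have := VA.choose_cast_key n i hle
  linear_combination ((-1:ℤ)^i) * this

lemma VA.sum_key3 {M : Type*} [AddCommGroup M] (n : ℕ) (F : ℕ → M) :
    ∑ i ∈ range (n+2), ((-1:ℤ)^i * ((n+1).choose i : ℤ) * (i:ℤ)) • F i
      = ∑ i ∈ range (n+1), (-((n:ℤ)+1) * ((-1:ℤ)^i * (n.choose i : ℤ))) • F (i+1) := by
  rw [Finset.sum_range_succ' _ (n+1)]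
  have h0 : ((-1:ℤ)^0 * (((n+1).choose 0) : ℤ) * ((0:ℕ):ℤ)) • F 0 = 0 := by simp
  rw [h0, add_zero]
  refine Finset.sum_congr rfl fun i hi => ?_
  congr 1
  have h := Nat.add_one_mul_choose_eq n i
  have h2 : (((n+1) * n.choose i : ℕ) : ℤ) = (((n+1).choose (i+1) * (i+1) : ℕ) : ℤ) := by
    exact_mod_cast congrArg (Nat.cast : ℕ → ℤ) h
  push_cast at h2 ⊢
  linear_combination (-((-1:ℤ)^(i+1))) * h2

lemma VA.sum_split {M : Type*} [AddCommGroup M] (m : ℕ) (p : ℤ) (F : ℕ → M) :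
    ∑ i ∈ range (m+2), ((-1:ℤ)^i * ((m+1).choose i : ℤ) * (-(p + ((m:ℤ)+1) - (i:ℤ)))) • F i
      = (-p) • ∑ i ∈ range (m+2), ((-1:ℤ)^i * ((m+1).choose i : ℤ)) • F i
        - ((m:ℤ)+1) • ∑ i ∈ range (m+1), ((-1:ℤ)^i * (m.choose i : ℤ)) • F i := by
  calc ∑ i ∈ range (m+2), ((-1:ℤ)^i * ((m+1).choose i : ℤ) * (-(p + ((m:ℤ)+1) - (i:ℤ)))) • F i
      = ∑ i ∈ range (m+2), ( ((-p) * ((-1:ℤ)^i * ((m+1).choose i : ℤ))) • F i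
          - ((-1:ℤ)^i * ((m+1).choose i : ℤ) * ((m:ℤ)+1-(i:ℤ))) • F i ) := by
        refine Finset.sum_congr rfl fun i _ => ?_
        rw [← sub_smul]; congr 1; ring
    _ = _ := by
        rw [Finset.sum_sub_distrib, VA.sum_key2]
        simp only [mul_smul]
        rw [← Finset.smul_sum, ← Finset.smul_sum]

lemma VA.sum_split3 {M : Type*} [AddCommGroup M] (m : ℕ) (p : ℤ) (F : ℕ → M) :
    ∑ i ∈ range (m+2), ((-1:ℤ)^i * ((m+1).choose i : ℤ) * (-(p + (i:ℤ)))) • F i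
      = (-p) • ∑ i ∈ range (m+2), ((-1:ℤ)^i * ((m+1).choose i : ℤ)) • F i
        + ((m:ℤ)+1) • ∑ i ∈ range (m+1), ((-1:ℤ)^i * (m.choose i : ℤ)) • F (i+1) := by
  calc ∑ i ∈ range (m+2), ((-1:ℤ)^i * ((m+1).choose i : ℤ) * (-(p + (i:ℤ)))) • F i
      = ∑ i ∈ range (m+2), ( ((-p) * ((-1:ℤ)^i * ((m+1).choose i : ℤ))) • F i
          - ((-1:ℤ)^i * ((m+1).choose i : ℤ) * (i:ℤ)) • F i ) := by
        refine Finset.sum_congr rfl fun i _ => ?_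
        rw [← sub_smul]; congr 1; ring
    _ = _ := by
        rw [Finset.sum_sub_distrib, VA.sum_key3]
        simp only [mul_smul, neg_smul, Finset.sum_neg_distrib, sub_neg_eq_add]
        rw [← Finset.smul_sum, ← Finset.smul_sum]

/-- The `A(y)B(z)` part of the locality sum. -/
def VA.PP {M : Type*} [AddCommGroup M] (A B : Ser M) (n : ℕ) (p q : ℤ) (v : M) : M :=
  ∑ i ∈ Finset.range (n+1), ((-1:ℤ)^i * (n.choose i : ℤ)) •
    A (p + (n:ℤ) - (i:ℤ)) (B (q + (i:ℤ)) v)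

/-- The `B(z)A(y)` part of the locality sum. -/
def VA.QQ {M : Type*} [AddCommGroup M] (A B : Ser M) (n : ℕ) (p q : ℤ) (v : M) : M :=
  ∑ i ∈ Finset.range (n+1), ((-1:ℤ)^i * (n.choose i : ℤ)) •
    B (q + (n:ℤ) - (i:ℤ)) (A (p + (i:ℤ)) v)

/-- The full locality sum. -/
def VA.LS {M : Type*} [AddCommGroup M] (A B : Ser M) (n : ℕ) (p q : ℤ) (v : M) : M :=
  VA.PP A B n p q v - ((-1:ℤ)^n) • VA.QQ A B n p q v

lemma VA.isLocalAt_iff {M : Type*} [AddCommGroup M] (A B : Ser M) (n : ℕ) :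
    IsLocalAt A B n ↔ ∀ p q v, VA.LS A B n p q v = 0 := by
  have e : ∀ (p q : ℤ) (v : M),
      (∑ i ∈ Finset.range (n + 1), ((-1 : ℤ) ^ i * (n.choose i : ℤ)) •
        (A (p + (n : ℤ) - (i : ℤ)) (B (q + (i : ℤ)) v)
          - (-1 : ℤ) ^ n • B (q + (n : ℤ) - (i : ℤ)) (A (p + (i : ℤ)) v)))
        = VA.LS A B n p q v := by
    intro p q v
    simp only [VA.LS, VA.PP, VA.QQ, smul_sub, Finset.sum_sub_distrib, Finset.smul_sum,
      smul_smul]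
    congr 1
    refine Finset.sum_congr rfl fun i _ => ?_
    ring_nf
  unfold IsLocalAt
  exact forall_congr' fun p => forall_congr' fun q => forall_congr' fun v => by rw [e]

lemma VA.PP_succ {M : Type*} [AddCommGroup M] (A B : Ser M) (n : ℕ) (p q : ℤ) (v : M) :
    VA.PP A B (n+1) p q v = VA.PP A B n (p+1) q v - VA.PP A B n p (q+1) v := by
  unfold VA.PP
  calc ∑ i ∈ range (n+1+1), ((-1:ℤ)^i * ((n+1).choose i : ℤ)) •
          A (p + ((n+1:ℕ):ℤ) - (i:ℤ)) (B (q + (i:ℤ)) v)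
      = ∑ i ∈ range (n+2), ((-1:ℤ)^i * ((n+1).choose i : ℤ)) •
          (fun j : ℕ => A (p + 1 + (n:ℤ) - (j:ℤ)) (B (q + (j:ℤ)) v)) i := by
        refine Finset.sum_congr rfl fun i _ => ?_
        push_cast; ring_nf
    _ = _ := by
        rw [VA.sum_pascal n]
        congr 1
        refine Finset.sum_congr rfl fun i _ => ?_
        push_cast; ring_nf

lemma VA.QQ_succ {M : Type*} [AddCommGroup M] (A B : Ser M) (n : ℕ) (p q : ℤ) (v : M) :
    VA.QQ A B (n+1) p q v = VA.QQ A B n p (q+1) v - VA.QQ A B n (p+1) q v := by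
  unfold VA.QQ
  calc ∑ i ∈ range (n+1+1), ((-1:ℤ)^i * ((n+1).choose i : ℤ)) •
          B (q + ((n+1:ℕ):ℤ) - (i:ℤ)) (A (p + (i:ℤ)) v)
      = ∑ i ∈ range (n+2), ((-1:ℤ)^i * ((n+1).choose i : ℤ)) •
          (fun j : ℕ => B (q + 1 + (n:ℤ) - (j:ℤ)) (A (p + (j:ℤ)) v)) i := by
        refine Finset.sum_congr rfl fun i _ => ?_
        push_cast; ring_nf
    _ = _ := by
        rw [VA.sum_pascal n]
        congr 1
        refine Finset.sum_congr rfl fun i _ => ?_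
        push_cast; ring_nf

lemma VA.LS_succ {M : Type*} [AddCommGroup M] (A B : Ser M) (n : ℕ) (p q : ℤ) (v : M) :
    VA.LS A B (n+1) p q v = VA.LS A B n (p+1) q v - VA.LS A B n p (q+1) v := by
  unfold VA.LS
  rw [VA.PP_succ, VA.QQ_succ, pow_succ]
  module

lemma VA.isLocalAt_succ {M : Type*} [AddCommGroup M] (A B : Ser M) (n : ℕ)
    (h : IsLocalAt A B n) : IsLocalAt A B (n+1) := by
  rw [VA.isLocalAt_iff] at h ⊢
  intro p q v
  rw [VA.LS_succ, h, h, sub_zero]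

lemma VA.isLocalAt_mono {M : Type*} [AddCommGroup M] (A B : Ser M) {n n' : ℕ}
    (h : IsLocalAt A B n) (hle : n ≤ n') : IsLocalAt A B n' := by
  induction n', hle using Nat.le_induction with
  | base => exact h
  | succ n' _ ih => exact VA.isLocalAt_succ A B n' ih

lemma VA.dPP {M : Type*} [AddCommGroup M] (A B : Ser M) (m : ℕ) (p q : ℤ) (v : M) :
    VA.PP (dSer A) B (m+1) p q v
      = (-p) • VA.PP A B (m+1) (p-1) q v - ((m:ℤ)+1) • VA.PP A B m p q v := by
  unfold VA.PP dSer
  calc ∑ i ∈ range (m+1+1), ((-1:ℤ)^i * ((m+1).choose i : ℤ)) •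
          ((-(p + ((m+1:ℕ):ℤ) - (i:ℤ))) • A (p + ((m+1:ℕ):ℤ) - (i:ℤ) - 1) (B (q + (i:ℤ)) v))
      = ∑ i ∈ range (m+2), ((-1:ℤ)^i * ((m+1).choose i : ℤ) * (-(p + ((m:ℤ)+1) - (i:ℤ)))) •
          (fun j : ℕ => A (p - 1 + ((m+1:ℕ):ℤ) - (j:ℤ)) (B (q + (j:ℤ)) v)) i := by
        refine Finset.sum_congr rfl fun i _ => ?_
        rw [smul_smul]
        push_cast; ring_nf
    _ = _ := by
        rw [VA.sum_split m p]
        congr 2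
        refine Finset.sum_congr rfl fun i _ => ?_
        push_cast; ring_nf

lemma VA.dQQ {M : Type*} [AddCommGroup M] (A B : Ser M)
    (hB : ∀ (r : ℤ) (z : ℤ) (w : M), B r (z • w) = z • B r w)
    (m : ℕ) (p q : ℤ) (v : M) :
    VA.QQ (dSer A) B (m+1) p q v
      = (-p) • VA.QQ A B (m+1) (p-1) q v + ((m:ℤ)+1) • VA.QQ A B m p q v := by
  unfold VA.QQ dSer
  calc ∑ i ∈ range (m+1+1), ((-1:ℤ)^i * ((m+1).choose i : ℤ)) •
          B (q + ((m+1:ℕ):ℤ) - (i:ℤ)) ((-(p + (i:ℤ))) • A (p + (i:ℤ) - 1) v)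
      = ∑ i ∈ range (m+2), ((-1:ℤ)^i * ((m+1).choose i : ℤ) * (-(p + (i:ℤ)))) •
          (fun j : ℕ => B (q + ((m+1:ℕ):ℤ) - (j:ℤ)) (A (p - 1 + (j:ℤ)) v)) i := by
        refine Finset.sum_congr rfl fun i _ => ?_
        rw [hB, smul_smul]
        push_cast; ring_nf
    _ = _ := by
        rw [VA.sum_split3 m p]
        congr 2
        refine Finset.sum_congr rfl fun i _ => ?_
        push_cast; ring_nf

lemma VA.dLS {M : Type*} [AddCommGroup M] (A B : Ser M)
    (hB : ∀ (r : ℤ) (z : ℤ) (w : M), B r (z • w) = z • B r w)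
    (m : ℕ) (p q : ℤ) (v : M) :
    VA.LS (dSer A) B (m+1) p q v
      = (-p) • VA.LS A B (m+1) (p-1) q v - ((m:ℤ)+1) • VA.LS A B m p q v := by
  unfold VA.LS
  rw [VA.dPP, VA.dQQ A B hB, pow_succ]
  module

end Stmt6Aux

/-- If `A(z)` and `B(z)` are mutually local of order exactly `n₀ ≥ 1`, then
`∂A(z)` and `B(z)` are mutually local of order exactly `n₀ + 1`. -/
theorem stmt6 (A B : Ser M) (hA : IsFieldSer A) (hB : IsFieldSer B)
    (hlA : IsLinSer (k := k) A) (hlB : IsLinSer (k := k) B)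
    (n₀ : ℕ) (hn₀ : 1 ≤ n₀) (h : HasOrder A B n₀) :
    HasOrder (dSer A) B (n₀ + 1) := by
  have hBlin : ∀ (r : ℤ) (z : ℤ) (w : M), B r (z • w) = z • B r w := by
    intro r z w
    exact map_zsmul (AddMonoidHom.mk' (B r) (hlB r).map_add) z w
  have htf : ∀ (z : ℤ), z ≠ 0 → ∀ (v : M), z • v = 0 → v = 0 := by
    intro z hz v hv
    have h1 : ((z : k)) • v = 0 := by rw [Int.cast_smul_eq_zsmul]; exact hv
    rcases smul_eq_zero.mp h1 with h' | h'
    · exact absurd h' (Int.cast_ne_zero.mpr hz)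
    · exact h'
  have hloc : ∀ n ≥ n₀, IsLocalAt A B n := fun n hn => VA.isLocalAt_mono A B h.1 hn
  constructor
  · rw [VA.isLocalAt_iff]
    intro p q v
    rw [VA.dLS A B hBlin n₀ p q v]
    rw [(VA.isLocalAt_iff A B (n₀+1)).mp (hloc (n₀+1) (by omega)) (p-1) q v,
      (VA.isLocalAt_iff A B n₀).mp (hloc n₀ le_rfl) p q v]
    simp
  · intro n hn
    by_contra hlt
    push_neg at hlt
    have h1 : IsLocalAt (dSer A) B n₀ := VA.isLocalAt_mono (dSer A) B hn (by omega)
    obtain ⟨m, rfl⟩ : ∃ m, n₀ = m + 1 := ⟨n₀ - 1, by omega⟩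
    have key : IsLocalAt A B m := by
      rw [VA.isLocalAt_iff]
      intro p q v
      have h2 := (VA.isLocalAt_iff (dSer A) B (m+1)).mp h1 p q v
      rw [VA.dLS A B hBlin m p q v,
        (VA.isLocalAt_iff A B (m+1)).mp (hloc (m+1) le_rfl) (p-1) q v] at h2
      simp only [smul_zero, zero_sub, neg_eq_zero] at h2
      exact htf ((m:ℤ)+1) (by omega) _ h2
    have := h.2 m key
    omega

end VA
end

section
/- Let A^{(1)}(z), …, A^{(ℓ)}(z) be pairwise mutually local fields on M. Then for every vector u ∈ M there exists an integer n such that A^{(1)}_{p₁} ⋯ A^{(ℓ)}_{p_ℓ} u = 0 whenever p₁ + ⋯ + p_ℓ ≥ n. -/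
open Finset

section VA

variable {k M : Type*} [Field k] [CharZero k] [AddCommGroup M] [Module k M]

/-!
Write `F p = A₀(p₀) ⋯ A_{l-1}(p_{l-1}) u`, the coefficients of a formal series in
`z₀, …, z_{l-1}`. Multiplying by `D = ∏_{a<b} (z_a - z_b)^{m_ab}` makes the product independent of
the order of the fields: by locality, `(z_a - z_b)^{m_ab}` lets adjacent `A_a`, `A_b` be exchanged.
Putting `A_i` innermost, where it kills `u` for large modes, shows that `(D F) p = 0` once `p i` is
large, for every `i`; hence `D F` vanishes in large total degree. Dividing by one factor
`z_a - z_b` (`a < b`) raises the degree bound by one: `F` is constant along `q + t (e_b - e_a)`,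
and for large `t` it vanishes, since with the modes of the fields to the right of `A_b` frozen,
`F` vanishes for large `p b`.
-/

lemma IsLocalAt.binomial_sum_swap {A B : Ser M} {n : ℕ} (h : IsLocalAt A B n) (p q : ℤ) (v : M) :
    ∑ t ∈ range (n + 1), ((-1) ^ t * n.choose t : ℤ) • A (p + ↑(n - t)) (B (q + t) v) =
      ∑ t ∈ range (n + 1), ((-1) ^ t * n.choose t : ℤ) • B (q + t) (A (p + ↑(n - t)) v) := by
  have h := h p q v
  simp only [smul_sub, sum_sub_distrib, sub_eq_zero, smul_smul] at h
  rw [eq_comm, ← sum_range_reflect]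
  convert h.symm using 1 <;> refine sum_congr rfl fun t ht => ?_ <;>
    obtain ⟨d, rfl⟩ := Nat.exists_eq_add_of_le (Nat.lt_succ_iff.mp (mem_range.mp ht))
  · have hsign : (-1 : ℤ) ^ d = (-1) ^ t * (-1) ^ (t + d) := by
      rw [pow_add, ← mul_assoc, ← mul_pow, neg_one_mul, neg_neg, one_pow, one_mul]
    rw [Nat.add_sub_cancel, Nat.add_sub_cancel_left, Nat.choose_symm_add, Nat.add_sub_cancel,
      hsign]
    push_cast
    ring_nf
  · rw [Nat.add_sub_cancel_left]
    push_cast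
    ring_nf

lemma List.Nodup.ne_and_ne_of_append_cons_cons {α : Type*} {a b : α} {s₁ s₂ : List α}
    (h : (s₁ ++ a :: b :: s₂).Nodup) : a ≠ b ∧ ∀ i ∈ s₁ ++ s₂, i ≠ a ∧ i ≠ b := by
  obtain ⟨ha, h'⟩ := List.nodup_cons.1 (List.nodup_middle.1 h)
  obtain ⟨hb, -⟩ := List.nodup_cons.1 (List.nodup_middle.1 h')
  simp only [List.mem_append, List.mem_cons, not_or] at ha hb
  refine ⟨ha.2.1, fun i hi => ⟨?_, ?_⟩⟩ <;> rintro rfl <;> simp_all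

namespace ModeSeries

open AddMonoidAlgebra

variable {ι : Type*}

section Multiplication

variable (M) in
/-- A family `F : (ι → ℤ) → M` stands for the formal series `∑ₚ F p z^(-p-1)`, so that
multiplication by the monomial `z^v` shifts the indices by `v`. -/
noncomputable def seriesMul : AddMonoidAlgebra ℤ (ι → ℤ) →ₐ[ℤ] Module.End ℤ ((ι → ℤ) → M) :=
  AddMonoidAlgebra.lift ℤ _ _
    { toFun := fun v => LinearMap.funLeft ℤ M (· + v.toAdd)
      map_one' := by ext; simp
      map_mul' := fun v w => by ext F p; simp [add_assoc] }

lemma seriesMul_single (v : ι → ℤ) (c : ℤ) (F : (ι → ℤ) → M) (p : ι → ℤ) :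
    seriesMul M (single v c) F p = c • F (p + v) := by
  simp [seriesMul]

lemma seriesMul_induction {P : ((ι → ℤ) → M) → Prop}
    (shift : ∀ v F, P F → P fun p => F (p + v)) (add : ∀ F G, P F → P G → P (F + G))
    (smul : ∀ (r : ℤ) F, P F → P (r • F)) (f : AddMonoidAlgebra ℤ (ι → ℤ)) {F : (ι → ℤ) → M}
    (hF : P F) : P (seriesMul M f F) := by
  induction f using AddMonoidAlgebra.induction_on with
  | of v =>
    convert shift v F hF using 1
    funext p
    rw [of_apply, seriesMul_single, one_smul, toAdd_ofAdd]
  | add f g hf hg => rw [map_add, LinearMap.add_apply]; exact add _ _ hf hg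
  | smul r f hf => rw [map_zsmul, LinearMap.smul_apply]; exact smul r _ hf

lemma exists_forall_le_coord_seriesMul (i : ι) {F : (ι → ℤ) → M}
    (hF : ∃ c, ∀ p : ι → ℤ, c ≤ p i → F p = 0) (f : AddMonoidAlgebra ℤ (ι → ℤ)) :
    ∃ c, ∀ p : ι → ℤ, c ≤ p i → seriesMul M f F p = 0 := by
  refine seriesMul_induction (P := fun G => ∃ c, ∀ p : ι → ℤ, c ≤ p i → G p = 0) ?_ ?_ ?_ f hF
  · rintro v G ⟨c, hc⟩
    exact ⟨c - v i, fun p hp => hc _ (by rw [Pi.add_apply]; linarith)⟩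
  · rintro G H ⟨c, hc⟩ ⟨d, hd⟩
    exact ⟨max c d, fun p hp => by
      rw [Pi.add_apply, hc p (le_of_max_le_left hp), hd p (le_of_max_le_right hp), add_zero]⟩
  · rintro r G ⟨c, hc⟩
    exact ⟨c, fun p hp => by rw [Pi.smul_apply, hc p hp, smul_zero]⟩

end Multiplication

section Chain

def chain (A : ι → ℤ → AddMonoid.End M) (s : List ι) (u : M) (p : ι → ℤ) : M :=
  (s.map fun i => A i (p i)).prod u

variable {A : ι → ℤ → AddMonoid.End M}

@[simp] lemma chain_cons (i : ι) (s : List ι) (u : M) (p : ι → ℤ) :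
    chain A (i :: s) u p = A i (p i) (chain A s u p) := rfl

lemma chain_append (s₁ s₂ : List ι) (u : M) (p : ι → ℤ) :
    chain A (s₁ ++ s₂) u p = (s₁.map fun i => A i (p i)).prod (chain A s₂ u p) := by
  simp [chain]

lemma chain_eq_foldr (s : List ι) (u : M) (p : ι → ℤ) :
    chain A s u p = (s.map fun i => ⇑(A i (p i))).foldr (· ∘ ·) id u := by
  induction s with
  | nil => rfl
  | cons i s ih => simp [ih]

lemma chain_congr {s : List ι} (u : M) {p q : ι → ℤ} (h : ∀ i ∈ s, p i = q i) :
    chain A s u p = chain A s u q := by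
  simp only [chain, List.map_congr_left fun i hi => congrArg (A i) (h i hi)]

end Chain

section Swap

variable [DecidableEq ι]

noncomputable def zvar (a : ι) : AddMonoidAlgebra ℤ (ι → ℤ) := single (Pi.single a 1) 1

lemma zvar_pow (a : ι) (n : ℕ) : zvar a ^ n = single (Pi.single a n) 1 := by
  rw [zvar, single_pow, one_pow]
  congr 1
  ext i
  simp [Pi.single_apply]

lemma seriesMul_zvar_sub (a b : ι) (F : (ι → ℤ) → M) (p : ι → ℤ) :
    seriesMul M (zvar a - zvar b) F p = F (p + Pi.single a 1) - F (p + Pi.single b 1) := by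
  simp [zvar, seriesMul_single]

lemma seriesMul_zvar_sub_pow (a b : ι) (n : ℕ) (F : (ι → ℤ) → M) (p : ι → ℤ) :
    seriesMul M ((zvar a - zvar b) ^ n) F p = ∑ t ∈ range (n + 1),
      ((-1) ^ t * n.choose t : ℤ) • F (p + Pi.single b ↑t + Pi.single a ↑(n - t)) := by
  rw [sub_eq_neg_add, add_pow]
  simp only [map_sum, LinearMap.sum_apply, Finset.sum_apply]
  refine sum_congr rfl fun t _ => ?_
  have hterm : (-zvar b) ^ t * zvar a ^ (n - t) * (n.choose t : AddMonoidAlgebra ℤ (ι → ℤ)) =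
      ((-1) ^ t * n.choose t : ℤ) • single (Pi.single b ↑t + Pi.single a ↑(n - t)) 1 := by
    rw [neg_pow, zvar_pow, zvar_pow, mul_assoc ((-1) ^ t), single_mul_single, mul_one, zsmul_eq_mul]
    push_cast
    ring
  rw [hterm, map_zsmul, LinearMap.smul_apply, Pi.smul_apply, seriesMul_single, one_smul, add_assoc]

variable {A : ι → ℤ → AddMonoid.End M}

lemma seriesMul_chain_swap {a b : ι} {n : ℕ} (hloc : IsLocalAt (A a ·) (A b ·) n)
    {s₁ s₂ : List ι} (hnd : (s₁ ++ a :: b :: s₂).Nodup) (u : M) :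
    seriesMul M ((zvar a - zvar b) ^ n) (chain A (s₁ ++ a :: b :: s₂) u) =
      seriesMul M ((zvar a - zvar b) ^ n) (chain A (s₁ ++ b :: a :: s₂) u) := by
  obtain ⟨hab, hne⟩ := hnd.ne_and_ne_of_append_cons_cons
  funext p
  rw [seriesMul_zvar_sub_pow, seriesMul_zvar_sub_pow]
  generalize hq : (fun t : ℕ => p + Pi.single b (t : ℤ) + Pi.single a ↑(n - t)) = q
  have hq' : ∀ t : ℕ, p + Pi.single b (t : ℤ) + Pi.single a ↑(n - t) = q t := fun t => by rw [← hq]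
  simp only [hq']
  have hqs : ∀ t, ∀ i ∈ s₁ ++ s₂, q t i = p i := fun t i hi => by
    simp [← hq, hne i hi]
  have hsplit : ∀ (x y : ι) (t : ℕ), chain A (s₁ ++ x :: y :: s₂) u (q t) =
      (s₁.map fun i => A i (p i)).prod (A x (q t x) (A y (q t y) (chain A s₂ u p))) := by
    intro x y t
    rw [chain_append, chain_cons, chain_cons, chain_congr u fun i hi => hqs t i (by simp [hi])]
    congr 2
    exact List.map_congr_left fun i hi => by rw [hqs t i (by simp [hi])]
  have hqa : ∀ t, q t a = p a + ↑(n - t) := fun t => by simp [← hq, hab]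
  have hqb : ∀ t, q t b = p b + t := fun t => by simp [← hq, hab.symm]
  set P := (s₁.map fun i => A i (p i)).prod
  simp only [hsplit, hqa, hqb, ← map_zsmul P, ← map_sum P, hloc.binomial_sum_swap]

end Swap

section Truncation

variable [Preorder ι]

def IsTruncatedAt (j : ι) (F : (ι → ℤ) → M) : Prop :=
  ∀ p : ι → ℤ, ∃ c, ∀ q : ι → ℤ, (∀ i, j < i → q i = p i) → c ≤ q j → F q = 0

lemma chain_isTruncatedAt {A : ι → ℤ → AddMonoid.End M} (hA : ∀ i, IsFieldSer (A i ·))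
    {s : List ι} (hs : s.Pairwise (· < ·)) {j : ι} (hj : j ∈ s) (u : M) :
    IsTruncatedAt j (chain A s u) := by
  induction s with
  | nil => simp at hj
  | cons a s ih =>
    rw [List.pairwise_cons] at hs
    intro p
    rcases List.mem_cons.1 hj with rfl | hj
    · obtain ⟨c, hc⟩ := hA j (chain A s u p)
      refine ⟨c, fun q hq hqj => ?_⟩
      rw [chain_cons, chain_congr u fun i hi => hq i (hs.1 i hi)]
      exact hc _ hqj
    · obtain ⟨c, hc⟩ := ih hs.2 hj p
      exact ⟨c, fun q hq hqj => by rw [chain_cons, hc q hq hqj, map_zero]⟩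

lemma IsTruncatedAt.seriesMul {j : ι} {F : (ι → ℤ) → M} (hF : IsTruncatedAt j F)
    (f : AddMonoidAlgebra ℤ (ι → ℤ)) : IsTruncatedAt j (seriesMul M f F) := by
  refine seriesMul_induction (P := IsTruncatedAt j) ?_ ?_ ?_ f hF
  · intro v G hG p
    obtain ⟨c, hc⟩ := hG (p + v)
    refine ⟨c - v j, fun q hq hqj => hc _ (fun i hi => ?_) ?_⟩
    · simp only [Pi.add_apply, hq i hi]
    · rw [Pi.add_apply]; linarith
  · intro G H hG hH p
    obtain ⟨c, hc⟩ := hG p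
    obtain ⟨d, hd⟩ := hH p
    refine ⟨max c d, fun q hq hqj => ?_⟩
    rw [Pi.add_apply, hc q hq (le_of_max_le_left hqj), hd q hq (le_of_max_le_right hqj),
      add_zero]
  · intro r G hG p
    obtain ⟨c, hc⟩ := hG p
    exact ⟨c, fun q hq hqj => by rw [Pi.smul_apply, hc q hq hqj, smul_zero]⟩

end Truncation

section Degree

variable [Fintype ι]

def VanishesForLargeDegree (F : (ι → ℤ) → M) : Prop :=
  ∃ N, ∀ p : ι → ℤ, N ≤ ∑ i, p i → F p = 0

lemma VanishesForLargeDegree.of_forall_coord {F : (ι → ℤ) → M}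
    (h : ∀ i, ∃ c, ∀ p : ι → ℤ, c ≤ p i → F p = 0) : VanishesForLargeDegree F := by
  choose c hc using h
  refine ⟨∑ i, (c i - 1) + 1, fun p hp => ?_⟩
  obtain ⟨i, -, hi⟩ := exists_lt_of_sum_lt (s := univ) (f := fun i => c i - 1) (g := p)
    (by linarith)
  exact hc i p (by linarith)

end Degree

section Division

variable [DecidableEq ι] [Preorder ι] [Fintype ι]

lemma VanishesForLargeDegree.of_seriesMul_zvar_sub {a b : ι} (hab : a < b) {F : (ι → ℤ) → M}
    (hF : IsTruncatedAt b F) (h : VanishesForLargeDegree (seriesMul M (zvar a - zvar b) F)) :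
    VanishesForLargeDegree F := by
  obtain ⟨N, hN⟩ := h
  refine ⟨N + 1, fun q hq => ?_⟩
  set v : ι → ℤ := Pi.single b 1 - Pi.single a 1
  have hv : ∑ i, v i = 0 := by simp [v, sum_sub_distrib]
  have hconst : ∀ t : ℕ, F (q + t • v) = F q := by
    intro t
    induction t with
    | zero => simp
    | succ t ih =>
      set r := q + t • v - Pi.single a 1
      have hr_sum : ∑ i, r i = ∑ i, q i - 1 := by
        simp [r, sum_add_distrib, sum_sub_distrib, ← mul_sum, hv]
      have hr := hN r (by rw [hr_sum]; linarith)
      rw [seriesMul_zvar_sub, sub_eq_zero] at hr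
      rw [← ih, show q + t • v = r + Pi.single a 1 by simp [r], hr, succ_nsmul]
      congr 1
      simp only [r, v]
      abel
  obtain ⟨c, hc⟩ := hF q
  rw [← hconst (c - q b).toNat]
  refine hc _ (fun i hi => ?_) ?_
  · simp [v, hi.ne', (hab.trans hi).ne']
  · simp [v, hab.ne']
    omega

lemma VanishesForLargeDegree.of_seriesMul_zvar_sub_pow {a b : ι} (hab : a < b) (n : ℕ)
    {F : (ι → ℤ) → M} (hF : IsTruncatedAt b F)
    (h : VanishesForLargeDegree (seriesMul M ((zvar a - zvar b) ^ n) F)) :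
    VanishesForLargeDegree F := by
  induction n with
  | zero => simpa using h
  | succ n ih =>
    rw [pow_succ', map_mul, Module.End.mul_apply] at h
    exact ih (h.of_seriesMul_zvar_sub hab (hF.seriesMul _))

lemma VanishesForLargeDegree.of_seriesMul_prod {S : Finset (ι × ι)} (hS : ∀ e ∈ S, e.1 < e.2)
    (m : ι → ι → ℕ) {F : (ι → ℤ) → M} (hF : ∀ j, IsTruncatedAt j F)
    (h : VanishesForLargeDegree (seriesMul M (∏ e ∈ S, (zvar e.1 - zvar e.2) ^ m e.1 e.2) F)) :
    VanishesForLargeDegree F := by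
  induction S using Finset.induction_on with
  | empty => simpa using h
  | insert e S he ih =>
    rw [prod_insert he, map_mul, Module.End.mul_apply] at h
    exact ih (fun e' he' => hS e' (mem_insert_of_mem he'))
      (h.of_seriesMul_zvar_sub_pow (hS e (mem_insert_self e S)) _ (hF _ |>.seriesMul _))

end Division

section Order

variable [LinearOrder ι] [Fintype ι]

noncomputable def localityPoly (m : ι → ι → ℕ) : AddMonoidAlgebra ℤ (ι → ℤ) :=
  ∏ e : ι × ι with e.1 < e.2, (zvar e.1 - zvar e.2) ^ m e.1 e.2

lemma VanishesForLargeDegree.of_seriesMul_localityPoly (m : ι → ι → ℕ) {F : (ι → ℤ) → M}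
    (hF : ∀ j, IsTruncatedAt j F) (h : VanishesForLargeDegree (seriesMul M (localityPoly m) F)) :
    VanishesForLargeDegree F :=
  h.of_seriesMul_prod (fun _ he => (mem_filter.1 he).2) m hF

lemma exists_localityPoly_eq_mul (m : ι → ι → ℕ) {a b : ι} (hab : a < b) :
    ∃ f, localityPoly m = f * (zvar a - zvar b) ^ m a b :=
  ⟨_, (prod_erase_mul _ (fun e : ι × ι => (zvar e.1 - zvar e.2) ^ m e.1 e.2)
    (mem_filter.2 ⟨mem_univ (a, b), hab⟩)).symm⟩

variable {A : ι → ℤ → AddMonoid.End M} {m : ι → ι → ℕ}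

lemma seriesMul_localityPoly_chain_swap (hloc : ∀ a b, a < b → IsLocalAt (A a ·) (A b ·) (m a b))
    {a b : ι} {s₁ s₂ : List ι} (hnd : (s₁ ++ a :: b :: s₂).Nodup) (u : M) :
    seriesMul M (localityPoly m) (chain A (s₁ ++ a :: b :: s₂) u) =
      seriesMul M (localityPoly m) (chain A (s₁ ++ b :: a :: s₂) u) := by
  wlog hab : a < b generalizing a b
  · have hnd' := ((List.Perm.swap b a s₂).append_left s₁).nodup_iff.1 hnd
    exact (this hnd' <| (not_lt.1 hab).lt_of_ne hnd'.ne_and_ne_of_append_cons_cons.1).symm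
  obtain ⟨f, hf⟩ := exists_localityPoly_eq_mul m hab
  rw [hf, map_mul, Module.End.mul_apply, Module.End.mul_apply,
    seriesMul_chain_swap (hloc a b hab) hnd]

lemma seriesMul_localityPoly_chain_perm (hloc : ∀ a b, a < b → IsLocalAt (A a ·) (A b ·) (m a b))
    {s t : List ι} (hst : s.Perm t) (hnd : s.Nodup) (u : M) :
    seriesMul M (localityPoly m) (chain A s u) = seriesMul M (localityPoly m) (chain A t u) := by
  suffices ∀ s₁ : List ι, (s₁ ++ s).Nodup →
      seriesMul M (localityPoly m) (chain A (s₁ ++ s) u) =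
        seriesMul M (localityPoly m) (chain A (s₁ ++ t) u) from this [] hnd
  clear hnd
  induction hst with
  | nil => exact fun _ _ => rfl
  | cons x _ ih =>
    intro s₁ hnd
    simpa using ih (s₁ ++ [x]) (by simpa using hnd)
  | swap x y l => exact fun s₁ hnd => seriesMul_localityPoly_chain_swap hloc hnd u
  | trans h₁₂ _ ih₁₂ ih₂₃ =>
    exact fun s₁ hnd => (ih₁₂ s₁ hnd).trans
      (ih₂₃ s₁ ((h₁₂.append_left s₁).nodup_iff.1 hnd))

theorem chain_vanishesForLargeDegree (hA : ∀ i, IsFieldSer (A i ·))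
    (hloc : ∀ a b, a < b → ∃ n, IsLocalAt (A a ·) (A b ·) n) {s : List ι}
    (hs : s.Pairwise (· < ·)) (hall : ∀ i, i ∈ s) (u : M) :
    VanishesForLargeDegree (chain A s u) := by
  choose! n hn using hloc
  refine .of_seriesMul_localityPoly n (fun j => chain_isTruncatedAt hA hs (hall j) u)
    (.of_forall_coord fun i => ?_)
  obtain ⟨s₁, s₂, rfl⟩ := List.append_of_mem (hall i)
  rw [seriesMul_localityPoly_chain_perm hn
    (List.perm_middle.trans (List.perm_append_singleton i _).symm) hs.nodup u]
  obtain ⟨c, hc⟩ := hA i u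
  refine exists_forall_le_coord_seriesMul i ⟨c, fun p hp => ?_⟩ _
  rw [chain_append, chain_cons, show A i (p i) (chain A [] u p) = 0 from hc _ hp, map_zero]

end Order

end ModeSeries

/-- For pairwise mutually local fields `A 0, …, A (l-1)` and any vector `u` there is an
integer `n` such that `A 0 (p 0) (⋯ (A (l-1) (p (l-1)) u)) = 0` whenever
`p 0 + ⋯ + p (l-1) ≥ n`. -/
theorem stmt9 (l : ℕ) (A : Fin l → Ser M)
    (hA : ∀ i, IsFieldSer (A i)) (hlA : ∀ i, IsLinSer (k := k) (A i))
    (hloc : ∀ i j : Fin l, i < j → ∃ m : ℕ, IsLocalAt (A i) (A j) m) :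
    ∀ u : M, ∃ n : ℤ, ∀ p : Fin l → ℤ, n ≤ ∑ i, p i →
      (List.ofFn fun i => A i (p i)).foldr (fun f g => f ∘ g) id u = 0 := by
  intro u
  let B : Fin l → ℤ → AddMonoid.End M := fun i n => (IsLinearMap.mk' _ (hlA i n)).toAddMonoidHom
  obtain ⟨N, hN⟩ := ModeSeries.chain_vanishesForLargeDegree (A := B) hA hloc
    (List.pairwise_lt_finRange l) List.mem_finRange u
  refine ⟨N, fun p hp => ?_⟩
  rw [List.ofFn_eq_map, ← hN p hp, ModeSeries.chain_eq_foldr]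
  rfl

end VA
end
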